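/- For all integers n ≥ 1, the following identity holds in Q(x_1,…,x_n,y_1,…,y_n). Let G be the group of pairs w = (σ,η) with σ ∈ S_n and η ∈ {±1}^n, acting by the Q-algebra automorphism sending x_i to x_{σ(i)}^{η_i} and fixing each y_j, with sgn(w) := sgn(σ)·∏_{i=1}^n η_i. Then [∏_{1≤i<j≤n}(1 − x_j/x_i)(1 − x_i^{−1}x_j^{−1}) · ∏_{i=1}^n (1 − x_i^{−2}) · ∏_{1≤j<k≤n}(1 − y_k/y_j)(1 − y_j^{−1}y_k^{−1})] / [∏_{i=1}^n ∏_{j=1}^n (1 + x_i^{−1}y_j^{−1}) · ∏_{1≤i≤j≤n}(1 + y_j/x_i) · ∏_{1≤j<i≤n}(1 + x_i/y_j)] = Σ_{w=(σ,η)∈G} sgn(w) / ∏_{i=1}^{n} (1 + y_i·x_{σ(i)}^{−η_i}). -/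

import Mathlib

/-!
Put `u i = x i + (x i)⁻¹` and `v j = y j + (y j)⁻¹`. For fixed `σ` the sum over the signs `η`
factors over `i`, and `1 / (1 + b a⁻¹) - 1 / (1 + b a) = (a - a⁻¹) / (u + v)` for `u = a + a⁻¹`,
`v = b + b⁻¹`; so the right-hand side is `det ((x i - (x i)⁻¹) / (u i + v j))`. On the left-hand
side every factor is a Laurent monomial times `u i - u j`, `v i - v j`, `x i - (x i)⁻¹` or
`u i + v j`; the monomials cancel, and what remains is Cauchy's determinant
`det (1 / (u i + v j)) = ∏_{i < j} (u j - u i) (v j - v i) / ∏_{i, j} (u i + v j)`.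
-/

open Finset Equiv

namespace Finset

variable {ι M : Type*} [Fintype ι] [LinearOrder ι]
  [LocallyFiniteOrderTop ι] [LocallyFiniteOrderBot ι]

theorem prod_prod_eq_prod_mul_prod_Ioi [CommMonoid M] (f : ι → ι → M) :
    ∏ i, ∏ j, f i j = ∏ i, (f i i * ∏ j ∈ Ioi i, f i j * f j i) := by
  have split (i : ι) : ∏ j, f i j = (∏ j ∈ Iio i, f i j) * (f i i * ∏ j ∈ Ioi i, f i j) := by
    rw [mul_prod_Ioi_eq_prod_Ici, ← prod_filter_mul_prod_filter_not univ (· < i)]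
    congr 2 <;> ext <;> simp
  have swap : ∏ i, ∏ j ∈ Iio i, f i j = ∏ i, ∏ j ∈ Ioi i, f j i := prod_comm' (by simp)
  simp only [split, prod_mul_distrib, swap]
  ac_rfl

theorem prod_prod_Iic_eq_prod_mul_prod_Ioi [CommMonoid M] (f : ι → ι → M) :
    ∏ j, ∏ i ∈ Iic j, f i j = ∏ i, (f i i * ∏ j ∈ Ioi i, f i j) := by
  simp only [mul_prod_Ioi_eq_prod_Ici]
  exact prod_comm' (by simp)

theorem prod_Ioi_mul_prod_mul_prod_Ioi_div [DivisionCommMonoid M] (g : ι → M)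
    (f h p q r : ι → ι → M) :
    (∏ i, ∏ j ∈ Ioi i, f i j) * (∏ i, g i) * (∏ i, ∏ j ∈ Ioi i, h i j) /
        ((∏ i, ∏ j, p i j) * (∏ j, ∏ i ∈ Iic j, q i j) * (∏ j, ∏ i ∈ Ioi j, r i j)) =
      ∏ i, (g i / (p i i * q i i) *
        ∏ j ∈ Ioi i, f i j * h i j / (p i j * q i j * (p j i * r j i))) := by
  rw [prod_prod_eq_prod_mul_prod_Ioi, prod_prod_Iic_eq_prod_mul_prod_Ioi]
  simp only [prod_mul_distrib, div_eq_mul_inv, mul_inv, prod_inv_distrib]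
  ac_rfl

theorem prod_mul_prod_Ioi_div_prod_prod [DivisionCommMonoid M] (c : ι → M) (f p : ι → ι → M) :
    (∏ i, c i) * ((∏ i, ∏ j ∈ Ioi i, f i j) / ∏ i, ∏ j, p i j) =
      ∏ i, (c i / p i i * ∏ j ∈ Ioi i, f i j / (p i j * p j i)) := by
  rw [prod_prod_eq_prod_mul_prod_Ioi]
  simp only [prod_mul_distrib, div_eq_mul_inv, mul_inv, prod_inv_distrib]
  ac_rfl

end Finset

namespace Matrix

theorem det_cauchy {K : Type*} [Field K] {n : ℕ} (u v : Fin n → K) (h : ∀ i j, u i + v j ≠ 0) :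
    det (of fun i j => (u i + v j)⁻¹) =
      (∏ i, ∏ j ∈ Ioi i, (u j - u i) * (v j - v i)) / ∏ i, ∏ j, (u i + v j) := by
  induction n with
  | zero => simp
  | succ m ih =>
    set M : Matrix (Fin (m + 1)) (Fin (m + 1)) K := of fun i j => (u i + v j)⁻¹
    -- subtracting these multiples of row `0` clears column `0` below the diagonal
    set c : Fin (m + 1) → K := Fin.cons 0 fun i => (u 0 + v 0) / (u i.succ + v 0)
    set B : Matrix (Fin (m + 1)) (Fin (m + 1)) K := of fun i j => M i j - c i * M 0 j
    have hMB : det M = det B :=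
      det_eq_of_forall_row_eq_smul_add_const c 0 rfl fun i j => by simp [B, c]
    have hB0 (i : Fin m) : B i.succ 0 = 0 := by
      have := h i.succ 0; have := h 0 0
      simp only [of_apply, Fin.cons_succ, B, M, c]
      field_simp
      ring
    have hB00 : B 0 0 = (u 0 + v 0)⁻¹ := by simp [B, M, c]
    have hBdet : det B = (u 0 + v 0)⁻¹ * det (B.submatrix Fin.succ Fin.succ) := by
      rw [det_succ_column_zero, Fin.sum_univ_succ, hB00]
      simp [hB0]
    have hBminor : B.submatrix Fin.succ Fin.succ =
        diagonal (fun i => (u i.succ - u 0) / (u i.succ + v 0)) *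
          (of fun i j => (u i.succ + v j.succ)⁻¹) *
          diagonal (fun j => (v j.succ - v 0) / (u 0 + v j.succ)) := by
      ext i j
      have := h i.succ 0; have := h 0 0; have := h 0 j.succ; have := h i.succ j.succ
      simp only [of_apply, submatrix_apply, Fin.cons_succ, mul_diagonal, diagonal_mul, B, M, c]
      field_simp
      ring
    rw [hMB, hBdet, hBminor, det_mul, det_mul, det_diagonal, det_diagonal,
      ih _ _ fun i j => h _ _]
    simp only [Fin.prod_univ_succ, Fin.prod_Ioi_zero, Fin.prod_Ioi_succ, prod_div_distrib,
      prod_mul_distrib]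
    have h00 := h 0 0
    have hcol : ∏ i : Fin m, (u i.succ + v 0) ≠ 0 := prod_ne_zero_iff.2 fun _ _ => h _ _
    have hrow : ∏ j : Fin m, (u 0 + v j.succ) ≠ 0 := prod_ne_zero_iff.2 fun _ _ => h _ _
    have hminor : ∏ i : Fin m, ∏ j : Fin m, (u i.succ + v j.succ) ≠ 0 :=
      prod_ne_zero_iff.2 fun _ _ => prod_ne_zero_iff.2 fun _ _ => h _ _
    field_simp

end Matrix

section Field

variable {K : Type*} [Field K] {a b : K}

theorem add_inv_add_add_inv_eq (ha : a ≠ 0) (hb : b ≠ 0) :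
    a + a⁻¹ + (b + b⁻¹) = (a + b) * (1 + a * b) / (a * b) := by
  field_simp
  ring

theorem one_sub_div_mul_one_sub_inv_mul_inv (ha : a ≠ 0) (hb : b ≠ 0) :
    (1 - b / a) * (1 - a⁻¹ * b⁻¹) = (a + a⁻¹ - (b + b⁻¹)) * a⁻¹ := by
  field_simp
  ring

theorem one_sub_zpow_neg_two (ha : a ≠ 0) : 1 - a ^ (-2 : ℤ) = (a - a⁻¹) * a⁻¹ := by
  field_simp

theorem one_add_inv_mul_inv_mul_one_add_div (ha : a ≠ 0) (hb : b ≠ 0) :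
    (1 + a⁻¹ * b⁻¹) * (1 + b / a) = (a + a⁻¹ + (b + b⁻¹)) * a⁻¹ := by
  field_simp
  ring

theorem one_add_inv_mul_inv_mul_one_add_div' (ha : a ≠ 0) (hb : b ≠ 0) :
    (1 + a⁻¹ * b⁻¹) * (1 + a / b) = (a + a⁻¹ + (b + b⁻¹)) * b⁻¹ := by
  field_simp
  ring

theorem sum_units_div_one_add_mul_zpow_neg (ha : a ≠ 0) (hb : b ≠ 0) (hab : a + b ≠ 0)
    (hab' : 1 + a * b ≠ 0) :
    ∑ e : ℤˣ, ((e : ℤ) : K) / (1 + b * a ^ (-(e : ℤ))) = (a - a⁻¹) / (a + a⁻¹ + (b + b⁻¹)) := by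
  rw [UnitsInt.univ, sum_pair (by decide), add_inv_add_add_inv_eq ha hb]
  have hba : 1 + b * a ≠ 0 := by rwa [mul_comm]
  simp only [Units.val_one, Units.val_neg, Int.cast_one, Int.cast_neg, neg_neg, zpow_neg,
    zpow_one]
  field_simp
  ring

theorem sum_prod_units_div_prod {ι : Type*} [Fintype ι] [DecidableEq ι] (F : ι → ℤˣ → K) :
    ∑ η : ι → ℤˣ, (((∏ i, η i : ℤˣ) : ℤ) : K) / ∏ i, F i (η i) =
      ∏ i, ∑ e : ℤˣ, ((e : ℤ) : K) / F i e := by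
  rw [Fintype.prod_sum]
  simp [prod_div_distrib]

end Field

namespace Dnn

variable {ι K : Type*} [Field K] [Fintype ι] (x y : ι → K)

theorem rhs_eq_det [DecidableEq ι] (hx : ∀ i, x i ≠ 0) (hy : ∀ j, y j ≠ 0)
    (hxy : ∀ i j, x i + y j ≠ 0) (hxy' : ∀ i j, 1 + x i * y j ≠ 0) :
    ∑ σ : Perm ι, ∑ η : ι → ℤˣ, (((Perm.sign σ * ∏ i, η i : ℤˣ) : ℤ) : K) /
        ∏ i, (1 + y i * x (σ i) ^ (-((η i) : ℤ))) =
      (Matrix.of fun i j => (x i - (x i)⁻¹) / (x i + (x i)⁻¹ + (y j + (y j)⁻¹))).det := by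
  rw [Matrix.det_apply]
  refine sum_congr rfl fun σ _ => ?_
  have hη := sum_prod_units_div_prod fun i (e : ℤˣ) => 1 + y i * x (σ i) ^ (-(e : ℤ))
  simp only [Units.val_mul, Int.cast_mul, mul_div_assoc, ← mul_sum, hη,
    sum_units_div_one_add_mul_zpow_neg (hx _) (hy _) (hxy _ _) (hxy' _ _), Units.smul_def,
    zsmul_eq_mul, Matrix.of_apply]

theorem lhs_eq [LinearOrder ι] [LocallyFiniteOrderTop ι] [LocallyFiniteOrderBot ι]
    (hx : ∀ i, x i ≠ 0) (hy : ∀ j, y j ≠ 0) :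
    ((∏ i, ∏ j ∈ Ioi i, ((1 - x j / x i) * (1 - (x i)⁻¹ * (x j)⁻¹))) *
      (∏ i, (1 - x i ^ (-2 : ℤ))) *
      (∏ j, ∏ k ∈ Ioi j, ((1 - y k / y j) * (1 - (y j)⁻¹ * (y k)⁻¹)))) /
    ((∏ i, ∏ j, (1 + (x i)⁻¹ * (y j)⁻¹)) *
      (∏ j, ∏ i ∈ Iic j, (1 + y j / x i)) *
      (∏ j, ∏ i ∈ Ioi j, (1 + x i / y j))) =
    (∏ i, (x i - (x i)⁻¹)) *
      ((∏ i, ∏ j ∈ Ioi i, (x j + (x j)⁻¹ - (x i + (x i)⁻¹)) * (y j + (y j)⁻¹ - (y i + (y i)⁻¹))) /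
        ∏ i, ∏ j, (x i + (x i)⁻¹ + (y j + (y j)⁻¹))) := by
  rw [prod_Ioi_mul_prod_mul_prod_Ioi_div, prod_mul_prod_Ioi_div_prod_prod]
  refine prod_congr rfl fun i _ => ?_
  rw [one_sub_zpow_neg_two (hx i), one_add_inv_mul_inv_mul_one_add_div (hx i) (hy i),
    mul_div_mul_right _ _ (inv_ne_zero (hx i))]
  congr 1
  refine prod_congr rfl fun j _ => ?_
  rw [one_sub_div_mul_one_sub_inv_mul_inv (hx i) (hx j),
    one_sub_div_mul_one_sub_inv_mul_inv (hy i) (hy j),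
    one_add_inv_mul_inv_mul_one_add_div (hx i) (hy j),
    one_add_inv_mul_inv_mul_one_add_div' (hx j) (hy i), mul_mul_mul_comm,
    mul_mul_mul_comm (_ + _ + _),
    mul_div_mul_right _ _ (mul_ne_zero (inv_ne_zero (hx i)) (inv_ne_zero (hy i)))]
  ring

end Dnn

theorem Dnn_denominator_identity_general (n : ℕ)
    (K : Type*) [Field K] [Algebra (MvPolynomial (Fin n ⊕ Fin n) ℚ) K]
    [IsFractionRing (MvPolynomial (Fin n ⊕ Fin n) ℚ) K]
    (x : Fin n → K) (y : Fin n → K)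
    (hx : ∀ i, x i = algebraMap (MvPolynomial (Fin n ⊕ Fin n) ℚ) K
      (MvPolynomial.X (Sum.inl i)))
    (hy : ∀ j, y j = algebraMap (MvPolynomial (Fin n ⊕ Fin n) ℚ) K
      (MvPolynomial.X (Sum.inr j))) :
    ((∏ i : Fin n, ∏ j ∈ Finset.Ioi i,
        ((1 - x j / x i) * (1 - (x i)⁻¹ * (x j)⁻¹))) *
      (∏ i : Fin n, (1 - x i ^ (-2 : ℤ))) *
      (∏ j : Fin n, ∏ k ∈ Finset.Ioi j,
        ((1 - y k / y j) * (1 - (y j)⁻¹ * (y k)⁻¹)))) /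
    ((∏ i : Fin n, ∏ j : Fin n, (1 + (x i)⁻¹ * (y j)⁻¹)) *
      (∏ j : Fin n, ∏ i ∈ Finset.Iic j, (1 + y j / x i)) *
      (∏ j : Fin n, ∏ i ∈ Finset.Ioi j, (1 + x i / y j))) =
    ∑ σ : Equiv.Perm (Fin n), ∑ η : Fin n → ℤˣ,
      (((Equiv.Perm.sign σ * ∏ i, η i : ℤˣ) : ℤ) : K) /
        ∏ i : Fin n, (1 + y i * x (σ i) ^ (-((η i) : ℤ))) := by
  have hmap {p : MvPolynomial (Fin n ⊕ Fin n) ℚ} (a : Fin n ⊕ Fin n → ℚ)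
      (hp : MvPolynomial.eval a p ≠ 0) : algebraMap _ K p ≠ 0 := fun h0 =>
    hp (by rw [IsFractionRing.to_map_eq_zero_iff.1 h0, map_zero])
  have hx0 (i : Fin n) : x i ≠ 0 := hx i ▸ hmap 1 (by simp)
  have hy0 (j : Fin n) : y j ≠ 0 := hy j ▸ hmap 1 (by simp)
  have hxy (i j : Fin n) : x i + y j ≠ 0 := by
    rw [hx, hy, ← map_add]; exact hmap (Pi.single (Sum.inl i) 1) (by simp)
  have hxy' (i j : Fin n) : 1 + x i * y j ≠ 0 := by
    rw [hx, hy, ← map_mul, ← map_one (algebraMap (MvPolynomial (Fin n ⊕ Fin n) ℚ) K), ← map_add]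
    exact hmap 0 (by simp)
  have huv (i j : Fin n) : x i + (x i)⁻¹ + (y j + (y j)⁻¹) ≠ 0 := by
    rw [add_inv_add_add_inv_eq (hx0 i) (hy0 j)]
    exact div_ne_zero (mul_ne_zero (hxy i j) (hxy' i j)) (mul_ne_zero (hx0 i) (hy0 j))
  rw [Dnn.lhs_eq x y hx0 hy0, Dnn.rhs_eq_det x y hx0 hy0 hxy hxy',
    ← Matrix.det_cauchy _ _ huv, ← Matrix.det_mul_column]
  simp only [div_eq_mul_inv, Matrix.of_apply]

/-- Weyl denominator identity for `D(n,n) = osp(2n|2n)` with `Δ^#` of type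
`C_n`, in `ℚ(x₁,…,x_n,y₁,…,y_n)`, with `xᵢ = e^{εᵢ}`, `yⱼ = e^{δⱼ}`;
`W^#` of type `C_n` is modelled by all pairs `(σ,η)` with `σ ∈ S_n`,
`η ∈ {±1}^n`, acting by `xᵢ ↦ x_{σ(i)}^{ηᵢ}`, with sign `sgn(σ)·∏ηᵢ`;
here `ρ = 0`. -/
theorem Dnn_denominator_identity (n : ℕ) (hn : 1 ≤ n)
    (K : Type*) [Field K] [Algebra (MvPolynomial (Fin n ⊕ Fin n) ℚ) K]
    [IsFractionRing (MvPolynomial (Fin n ⊕ Fin n) ℚ) K]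
    (x : Fin n → K) (y : Fin n → K)
    (hx : ∀ i, x i = algebraMap (MvPolynomial (Fin n ⊕ Fin n) ℚ) K
      (MvPolynomial.X (Sum.inl i)))
    (hy : ∀ j, y j = algebraMap (MvPolynomial (Fin n ⊕ Fin n) ℚ) K
      (MvPolynomial.X (Sum.inr j))) :
    ((∏ i : Fin n, ∏ j ∈ Finset.Ioi i,
        ((1 - x j / x i) * (1 - (x i)⁻¹ * (x j)⁻¹))) *
      (∏ i : Fin n, (1 - x i ^ (-2 : ℤ))) *
      (∏ j : Fin n, ∏ k ∈ Finset.Ioi j,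
        ((1 - y k / y j) * (1 - (y j)⁻¹ * (y k)⁻¹)))) /
    ((∏ i : Fin n, ∏ j : Fin n, (1 + (x i)⁻¹ * (y j)⁻¹)) *
      (∏ j : Fin n, ∏ i ∈ Finset.Iic j, (1 + y j / x i)) *
      (∏ j : Fin n, ∏ i ∈ Finset.Ioi j, (1 + x i / y j))) =
    ∑ σ : Equiv.Perm (Fin n), ∑ η : Fin n → ℤˣ,
      (((Equiv.Perm.sign σ * ∏ i, η i : ℤˣ) : ℤ) : K) /
        ∏ i : Fin n, (1 + y i * x (σ i) ^ (-((η i) : ℤ))) :=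
  Dnn_denominator_identity_general n K x y hx hy
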